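/- For t = 4k + r with 0 ≤ r ≤ 3 and t ≥ 6, the local metric dimension of the wheel K_1 + C_t equals k if r = 0 and k+1 otherwise. -/

import Mathlib

open SimpleGraph

/-- A set `S` is a local metric generator for `G` if every pair of adjacent
vertices is distinguished (by distance) by some element of `S`. -/
def IsLocalMetricGenerator {α : Type*} (G : SimpleGraph α) (S : Set α) : Prop :=
  ∀ x y : α, G.Adj x y → ∃ v ∈ S, G.dist v x ≠ G.dist v y

/-- The local metric dimension of a graph. -/
noncomputable def localMetricDim {α : Type*} (G : SimpleGraph α) : ℕ :=
  sInf {k | ∃ S : Finset α, S.card = k ∧ IsLocalMetricGenerator G ↑S}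

/-- A local metric basis: a minimum-cardinality local metric generator. -/
def IsLocalMetricBasis {α : Type*} (G : SimpleGraph α) (S : Finset α) : Prop :=
  IsLocalMetricGenerator G ↑S ∧ S.card = localMetricDim G

/-- The corona product `G ⊙ H`. -/
def corona {α β : Type*} (G : SimpleGraph α) (H : SimpleGraph β) :
    SimpleGraph (α ⊕ α × β) :=
  SimpleGraph.fromRel (fun x y => match x, y with
    | Sum.inl a, Sum.inl a' => G.Adj a a'
    | Sum.inl a, Sum.inr p => a = p.1
    | Sum.inr p, Sum.inl a => a = p.1
    | Sum.inr p, Sum.inr q => p.1 = q.1 ∧ H.Adj p.2 q.2)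

/-- The join `K₁ + H`; the vertex of `K₁` is `none`. -/
def joinK1 {β : Type*} (H : SimpleGraph β) : SimpleGraph (Option β) :=
  SimpleGraph.fromRel (fun x y => match x, y with
    | none, some _ => True
    | some b, some b' => H.Adj b b'
    | _, _ => False)

/-- Eccentricity of a vertex (in `ℕ∞`). -/
noncomputable def ecc {α : Type*} (G : SimpleGraph α) (x : α) : ℕ∞ :=
  ⨆ y, G.edist x y

/-- Radius of a graph (in `ℕ∞`). -/
noncomputable def gradius {α : Type*} (G : SimpleGraph α) : ℕ∞ :=
  ⨅ x, ecc G x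

/-- Diameter of a graph (in `ℕ∞`). -/
noncomputable def gdiam {α : Type*} (G : SimpleGraph α) : ℕ∞ :=
  ⨆ x, ecc G x

/-!
In the wheel two distinct rim vertices are at distance 1 or 2, so the hub separates no rim edge,
and a rim vertex `s` separates the rim edge `{i, i + 1}` exactly when `s - i ∈ {-1, 0, 1, 2}`.
Each vertex of a local metric generator therefore covers at most four of the `t` rim edges, so it
has at least `⌈t / 4⌉` elements. Conversely the rim vertices `0, 4, 8, …` cover every rim edge,
and they separate the hub from each rim vertex `b` through a vertex not adjacent to `b`; such a
vertex exists because `0` and `4` have no common neighbour once `t ≠ 6`. For `t = 6` the set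
`{0, 3}` does the job instead.
-/

open Finset
open scoped Fin.CommRing

theorem localMetricDim_eq_of_forall_card_le {α : Type*} {G : SimpleGraph α} {m : ℕ}
    (hex : ∃ S : Finset α, #S = m ∧ IsLocalMetricGenerator G ↑S)
    (hle : ∀ S : Finset α, IsLocalMetricGenerator G ↑S → m ≤ #S) :
    localMetricDim G = m :=
  le_antisymm (Nat.sInf_le hex) <| le_csInf ⟨m, hex⟩ <| by
    rintro _ ⟨S, rfl, hS⟩
    exact hle S hS

section Join

variable {β : Type*} {H : SimpleGraph β}

@[simp]
theorem joinK1_adj_none_some (b : β) : (joinK1 H).Adj none (some b) := by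
  simp [joinK1]

@[simp]
theorem joinK1_adj_some_none (a : β) : (joinK1 H).Adj (some a) none :=
  (joinK1_adj_none_some a).symm

@[simp]
theorem joinK1_adj_some_some {a b : β} : (joinK1 H).Adj (some a) (some b) ↔ H.Adj a b := by
  simp only [joinK1, fromRel_adj, ne_eq, Option.some.injEq]
  exact ⟨fun ⟨_, h⟩ => h.elim id H.adj_symm, fun h => ⟨h.ne, .inl h⟩⟩

theorem joinK1_dist_none_some (b : β) : (joinK1 H).dist none (some b) = 1 :=
  dist_eq_one_iff_adj.mpr (joinK1_adj_none_some b)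

theorem joinK1_dist_some_none (a : β) : (joinK1 H).dist (some a) none = 1 :=
  dist_eq_one_iff_adj.mpr (joinK1_adj_some_none a)

open Classical in
theorem joinK1_dist_some_some (a b : β) :
    (joinK1 H).dist (some a) (some b) = if a = b then 0 else if H.Adj a b then 1 else 2 := by
  split_ifs with hab hadj
  · rw [hab, dist_self]
  · exact dist_eq_one_iff_adj.mpr (joinK1_adj_some_some.mpr hadj)
  · have hreach : (joinK1 H).Reachable (some a) (some b) :=
      (joinK1_adj_some_none a).reachable.trans (joinK1_adj_none_some b).reachable
    have hle : (joinK1 H).dist (some a) (some b) ≤ 2 :=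
      dist_le (.cons (joinK1_adj_some_none a) (.cons (joinK1_adj_none_some b) .nil))
    have hne0 : (joinK1 H).dist (some a) (some b) ≠ 0 :=
      (hreach.pos_dist_of_ne (by simpa using hab)).ne'
    have hne1 : (joinK1 H).dist (some a) (some b) ≠ 1 := by
      rwa [ne_eq, dist_eq_one_iff_adj, joinK1_adj_some_some]
    omega

theorem isLocalMetricGenerator_joinK1_image_some {S : Set β}
    (hedge : ∀ a b, H.Adj a b →
      ∃ s ∈ S, (joinK1 H).dist (some s) (some a) ≠ (joinK1 H).dist (some s) (some b))
    (hhub : ∀ b, ∃ s ∈ S, ¬H.Adj s b) :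
    IsLocalMetricGenerator (joinK1 H) (some '' S) := by
  have hhub' : ∀ b, ∃ s ∈ S, (joinK1 H).dist (some s) none ≠ (joinK1 H).dist (some s) (some b) := by
    intro b
    obtain ⟨s, hs, hsb⟩ := hhub b
    refine ⟨s, hs, ?_⟩
    rw [joinK1_dist_some_none, joinK1_dist_some_some]
    split_ifs <;> trivial
  rintro (_ | a) (_ | b) hab
  · exact absurd rfl hab.ne
  · obtain ⟨s, hs, hne⟩ := hhub' b
    exact ⟨some s, Set.mem_image_of_mem _ hs, hne⟩
  · obtain ⟨s, hs, hne⟩ := hhub' a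
    exact ⟨some s, Set.mem_image_of_mem _ hs, hne.symm⟩
  · obtain ⟨s, hs, hne⟩ := hedge a b (joinK1_adj_some_some.mp hab)
    exact ⟨some s, Set.mem_image_of_mem _ hs, hne⟩

end Join

section Wheel

variable {n : ℕ}

theorem Fin.natCast_ne_zero_of_lt {k : ℕ} (hk0 : 0 < k) (hk : k < n + 2) :
    (k : Fin (n + 2)) ≠ 0 := by
  rw [ne_eq, CharP.cast_eq_zero_iff (Fin (n + 2)) (n + 2)]
  exact Nat.not_dvd_of_pos_of_lt hk0 hk

theorem cycleGraph_sub_eq_of_adj_of_adj {s₁ s₂ b : Fin (n + 2)}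
    (h₁ : (cycleGraph (n + 2)).Adj s₁ b) (h₂ : (cycleGraph (n + 2)).Adj s₂ b) :
    s₁ - s₂ ∈ ({0, 2, -2} : Finset (Fin (n + 2))) := by
  simp only [mem_insert, mem_singleton]
  rcases cycleGraph_adj.mp h₁ with h₁ | h₁ <;> rcases cycleGraph_adj.mp h₂ with h₂ | h₂
  · exact .inl (by linear_combination h₁ - h₂)
  · exact .inr (.inl (by linear_combination h₁ + h₂))
  · exact .inr (.inr (by linear_combination -h₁ - h₂))
  · exact .inl (by linear_combination h₂ - h₁)

theorem wheel_dist_some_some (s x : Fin (n + 2)) :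
    (joinK1 (cycleGraph (n + 2))).dist (some s) (some x) =
      if s - x = 0 then 0 else if s - x = 1 ∨ s - x = -1 then 1 else 2 := by
  simp only [joinK1_dist_some_some, cycleGraph_adj, sub_eq_zero,
    show x - s = 1 ↔ s - x = -1 by rw [← neg_sub, neg_eq_iff_eq_neg]]

theorem wheel_dist_ne_dist_add_one_iff (hn : 2 ≤ n) (s i : Fin (n + 2)) :
    (joinK1 (cycleGraph (n + 2))).dist (some s) (some i) ≠
        (joinK1 (cycleGraph (n + 2))).dist (some s) (some (i + 1)) ↔
      s - i ∈ ({-1, 0, 1, 2} : Finset (Fin (n + 2))) := by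
  have h1 : (1 : Fin (n + 2)) ≠ 0 := by exact_mod_cast Fin.natCast_ne_zero_of_lt one_pos (by omega)
  have h2 : (2 : Fin (n + 2)) ≠ 0 := by exact_mod_cast Fin.natCast_ne_zero_of_lt two_pos (by omega)
  have h3 : (3 : Fin (n + 2)) ≠ 0 := by exact_mod_cast Fin.natCast_ne_zero_of_lt three_pos (by omega)
  -- with `d = s - i` the two distances are `f d` and `f (d - 1)` for the profile `f` of
  -- `wheel_dist_some_some`; comparing them needs `-1, 0, 1, 2` to be pairwise distinct
  rw [wheel_dist_some_some, wheel_dist_some_some, show s - (i + 1) = s - i - 1 by ring]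
  simp only [mem_insert, mem_singleton]
  generalize s - i = d
  have : (-1 : Fin (n + 2)) ≠ 2 := fun h => h3 (by linear_combination -h)
  have : (1 : Fin (n + 2)) ≠ -1 := fun h => h2 (by linear_combination h)
  have : (1 : Fin (n + 2)) ≠ 2 := fun h => h1 (by linear_combination -h)
  grind

theorem four_mul_card_le_of_isLocalMetricGenerator_wheel (hn : 2 ≤ n)
    {S : Finset (Option (Fin (n + 2)))}
    (hS : IsLocalMetricGenerator (joinK1 (cycleGraph (n + 2))) ↑S) : n + 2 ≤ 4 * #S := by
  classical
  have hcover : (univ : Finset (Fin (n + 2))) ⊆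
      S.eraseNone.biUnion fun s => ({-1, 0, 1, 2} : Finset (Fin (n + 2))).image (s - ·) := by
    intro i _
    obtain ⟨_ | s, hs, hne⟩ :=
      hS _ _ (joinK1_adj_some_some.mpr (cycleGraph_adj.mpr (.inr (add_sub_cancel_left i 1))))
    · exact absurd (by rw [joinK1_dist_none_some, joinK1_dist_none_some]) hne
    · simp only [mem_biUnion, mem_eraseNone, mem_image]
      exact ⟨s, hs, s - i, (wheel_dist_ne_dist_add_one_iff hn s i).mp hne, sub_sub_cancel s i⟩
  calc n + 2 = #(univ : Finset (Fin (n + 2))) := by simp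
    _ ≤ #S.eraseNone * 4 :=
      (card_le_card hcover).trans <| card_biUnion_le_card_mul _ _ _ fun _ _ =>
        card_image_le.trans card_le_four
    _ ≤ 4 * #S := by linarith [card_eraseNone_le S]

theorem isLocalMetricGenerator_wheel (hn : 2 ≤ n) {S : Finset (Fin (n + 2))}
    (hwindow : ∀ i, ∃ s ∈ S, s - i ∈ ({-1, 0, 1, 2} : Finset (Fin (n + 2))))
    {s₁ s₂ : Fin (n + 2)} (hs₁ : s₁ ∈ S) (hs₂ : s₂ ∈ S)
    (hs₁₂ : s₁ - s₂ ∉ ({0, 2, -2} : Finset (Fin (n + 2)))) :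
    IsLocalMetricGenerator (joinK1 (cycleGraph (n + 2))) ↑(S.image some) := by
  rw [coe_image]
  refine isLocalMetricGenerator_joinK1_image_some (fun a b hab => ?_) fun b => ?_
  · rcases cycleGraph_adj.mp hab with h | h
    · obtain ⟨s, hs, hsb⟩ := hwindow b
      rw [sub_eq_iff_eq_add'] at h
      subst h
      exact ⟨s, hs, ((wheel_dist_ne_dist_add_one_iff hn s b).mpr hsb).symm⟩
    · obtain ⟨s, hs, hsa⟩ := hwindow a
      rw [sub_eq_iff_eq_add'] at h
      subst h
      exact ⟨s, hs, (wheel_dist_ne_dist_add_one_iff hn s a).mpr hsa⟩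
  · by_contra! h
    exact hs₁₂ (cycleGraph_sub_eq_of_adj_of_adj (h s₁ hs₁) (h s₂ hs₂))

theorem card_image_four_mul {m : ℕ} (hm : 4 * m ≤ n + 5) :
    #((range m).image fun j => ((4 * j : ℕ) : Fin (n + 2))) = m := by
  rw [card_image_of_injOn, card_range]
  intro j₁ hj₁ j₂ hj₂ h
  simp only [coe_range, Set.mem_Iio] at hj₁ hj₂
  have := congrArg Fin.val h
  rw [Fin.val_cast_of_lt (by omega), Fin.val_cast_of_lt (by omega)] at this
  omega

theorem exists_four_mul_sub_mem {m : ℕ} (hm : n + 2 ≤ 4 * m) (i : Fin (n + 2)) :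
    ∃ j < m, ((4 * j : ℕ) : Fin (n + 2)) - i ∈ ({-1, 0, 1, 2} : Finset (Fin (n + 2))) := by
  -- `j = (i + 2) / 4` unless `4 * j` leaves the cycle; then `i ≥ n` and `j = 0` works after wrapping
  obtain ⟨j, hj, δ, hδ, e, heq⟩ :
      ∃ j < m, ∃ δ ≤ 3, ∃ e, 4 * j + 1 + (n + 2) * e = i.val + δ := by
    by_cases h : i.val + 2 < 4 * m
    · exact ⟨(i.val + 2) / 4, by omega, 3 - (i.val + 2) % 4, by omega, 0, by omega⟩
    · exact ⟨0, by omega, n + 3 - i.val, by omega, 1, by omega⟩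
  refine ⟨j, hj, ?_⟩
  have hcast := congrArg (fun x : ℕ => (x : Fin (n + 2))) heq
  simp only [Nat.cast_add, Nat.cast_mul, CharP.cast_eq_zero, zero_mul, add_zero,
    Fin.cast_val_eq_self] at hcast
  rw [show ((4 * j : ℕ) : Fin (n + 2)) - i = δ - 1 by push_cast at hcast ⊢; linear_combination hcast]
  interval_cases δ <;> norm_num

theorem exists_isLocalMetricGenerator_wheel (hn : 4 ≤ n) :
    ∃ S : Finset (Option (Fin (n + 2))), #S = (n + 5) / 4 ∧
      IsLocalMetricGenerator (joinK1 (cycleGraph (n + 2))) ↑S := by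
  suffices ∃ S : Finset (Fin (n + 2)), #S = (n + 5) / 4 ∧
      (∀ i, ∃ s ∈ S, s - i ∈ ({-1, 0, 1, 2} : Finset (Fin (n + 2)))) ∧
      ∃ s₁ ∈ S, ∃ s₂ ∈ S, s₁ - s₂ ∉ ({0, 2, -2} : Finset (Fin (n + 2))) by
    obtain ⟨S, hcard, hwindow, s₁, hs₁, s₂, hs₂, hs₁₂⟩ := this
    refine ⟨S.image some, ?_, isLocalMetricGenerator_wheel (by omega) hwindow hs₁ hs₂ hs₁₂⟩
    rw [card_image_of_injective _ (Option.some_injective _), hcard]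
  obtain rfl | hn := (show n = 4 ∨ 5 ≤ n by omega)
  · exact ⟨{0, 3}, rfl, by decide, 0, by simp, 3, by simp, by decide⟩
  · refine ⟨_, card_image_four_mul (by omega), fun i => ?_, (4 * 1 : ℕ), ?_, (4 * 0 : ℕ), ?_, ?_⟩
    · obtain ⟨j, hj, hmem⟩ := exists_four_mul_sub_mem (m := (n + 5) / 4) (by omega) i
      exact ⟨_, mem_image_of_mem _ (mem_range.mpr hj), hmem⟩
    · exact mem_image_of_mem _ (mem_range.mpr (by omega))
    · exact mem_image_of_mem _ (mem_range.mpr (by omega))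
    · have h2 : ((2 : ℕ) : Fin (n + 2)) ≠ 0 := Fin.natCast_ne_zero_of_lt two_pos (by omega)
      have h4 : ((4 : ℕ) : Fin (n + 2)) ≠ 0 := Fin.natCast_ne_zero_of_lt four_pos (by omega)
      have h6 : ((6 : ℕ) : Fin (n + 2)) ≠ 0 := Fin.natCast_ne_zero_of_lt (by norm_num) (by omega)
      push_cast at h2 h4 h6 ⊢
      simp only [mem_insert, mem_singleton, not_or]
      exact ⟨fun h => h4 (by linear_combination h), fun h => h2 (by linear_combination h),
        fun h => h6 (by linear_combination h)⟩

theorem localMetricDim_wheel (hn : 4 ≤ n) :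
    localMetricDim (joinK1 (cycleGraph (n + 2))) = (n + 5) / 4 :=
  localMetricDim_eq_of_forall_card_le (exists_isLocalMetricGenerator_wheel hn) fun S hS => by
    have := four_mul_card_le_of_isLocalMetricGenerator_wheel (by omega) hS
    omega

end Wheel

/-- For `t = 4k + r`, `0 ≤ r ≤ 3`, `t ≥ 6`,
`dim_l (K₁ + C_t) = k` if `r = 0` and `k + 1` otherwise. -/
theorem stmt11 (k r t : ℕ) (htk : t = 4 * k + r) (hr : r ≤ 3) (ht : 6 ≤ t) :
    localMetricDim (joinK1 (SimpleGraph.cycleGraph t)) = if r = 0 then k else k + 1 := by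
  obtain ⟨n, rfl⟩ : ∃ n, t = n + 2 := ⟨t - 2, by omega⟩
  rw [localMetricDim_wheel (by omega)]
  split_ifs <;> omega
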